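/- arXiv:1810.02532 — 4 statements merged into one kernel-verified Lean document; each statement's English description precedes it below -/
import Mathlib

section
/- Let Ã be an n×n Hermitian matrix of the 3×3 block form Ã = [[Λ̂₁, 0, R₁*],[0, Λ̂₂, R₂*],[R₁, R₂, A₃]] as described. Suppose X̃₁ ∈ ℂ^{n×k₁} has orthonormal columns and satisfies ÃX̃₁ = X̃₁Λ₁ for a real diagonal k₁×k₁ matrix Λ₁, and partition its rows conformally as X̃₁ = (W; Y; Z) with W ∈ ℂ^{k₁×k₁}, Y ∈ ℂ^{(k−k₁)×k₁}, Z ∈ ℂ^{(n−k)×k₁}. Assume Gap > 0 and gap > 0. Then ‖[Y; Z]‖_F ≤ (‖R‖_F/Gap) · √(1 + ‖R₂‖²/gap²), where ‖[Y; Z]‖_F is the Frobenius norm of the stacked matrix with blocks Y and Z. -/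
/-!
Write `X̃₁ = (C; Z)` with `C = (W; Y)`. The last block row of `ÃX̃₁ = X̃₁Λ₁` is the
Sylvester equation `ZΛ₁ − A₃Z = RC`. Conjugating by the unitary that diagonalises `A₃` turns it
into an entrywise equation whose coefficients are differences `λ − μ` of modulus at least `Gap`,
and unitary factors do not change Frobenius norms, so `Gap‖Z‖_F ≤ ‖RC‖_F ≤ ‖R‖_F‖C‖ ≤ ‖R‖_F`
(`C` consists of rows of a matrix with orthonormal columns). The middle block row,
`YΛ₁ − Λ̂₂Y = R₂*Z`, is already entrywise, whence `gap‖Y‖_F ≤ ‖R₂‖‖Z‖_F`. Adding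
`‖Y‖_F² ≤ ‖R₂‖²‖Z‖_F²/gap²` to `‖Z‖_F²` gives the bound.
-/

open Matrix
open scoped Matrix.Norms.L2Operator

/-- The Frobenius norm of a complex matrix, written explicitly. -/
noncomputable def frobNorm {α β : Type*} [Fintype α] [Fintype β] (M : Matrix α β ℂ) : ℝ :=
  Real.sqrt (∑ i, ∑ j, ‖M i j‖ ^ 2)

namespace Matrix

section L2OpNorm

variable {𝕜 : Type*} [RCLike 𝕜] {m m₁ m₂ n : Type*} [Fintype m] [Fintype m₁]
  [Fintype m₂] [Fintype n] [DecidableEq n]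

lemma l2_opNorm_le_one_of_conjTranspose_mul_self_eq_one {A : Matrix m n 𝕜} (hA : Aᴴ * A = 1) :
    ‖A‖ ≤ 1 := by
  have h : ‖A‖ * ‖A‖ ≤ 1 := by
    rw [← l2_opNorm_conjTranspose_mul_self, hA, ← diagonal_one, l2_opNorm_diagonal]
    exact (pi_norm_le_iff_of_nonneg zero_le_one).mpr fun _ => norm_one.le
  nlinarith [norm_nonneg A]

lemma l2_opNorm_toRows₁_le (A : Matrix (m₁ ⊕ m₂) n 𝕜) : ‖A.toRows₁‖ ≤ ‖A‖ := by
  classical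
  set P : Matrix (m₁ ⊕ m₂) m₁ 𝕜 := fromRows 1 0
  have hP : ‖Pᴴ‖ ≤ 1 := by
    rw [l2_opNorm_conjTranspose]
    refine l2_opNorm_le_one_of_conjTranspose_mul_self_eq_one ?_
    simp [P, conjTranspose_fromRows_eq_fromCols_conjTranspose, fromCols_mul_fromRows]
  have hA : A.toRows₁ = Pᴴ * A := by
    simp only [P, conjTranspose_fromRows_eq_fromCols_conjTranspose, conjTranspose_one,
      conjTranspose_zero]
    rw [← fromRows_toRows A, fromCols_mul_fromRows]
    simp
  calc ‖A.toRows₁‖ ≤ ‖Pᴴ‖ * ‖A‖ := hA ▸ l2_opNorm_mul _ _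
    _ ≤ ‖A‖ := mul_le_of_le_one_left (norm_nonneg _) hP

end L2OpNorm

section Frobenius

variable {l m m₁ m₂ n : Type*} [Fintype l] [Fintype m] [Fintype m₁] [Fintype m₂] [Fintype n]

lemma frobNorm_nonneg (M : Matrix m n ℂ) : 0 ≤ frobNorm M := Real.sqrt_nonneg _

lemma frobNorm_sq (M : Matrix m n ℂ) : frobNorm M ^ 2 = ∑ i, ∑ j, ‖M i j‖ ^ 2 :=
  Real.sq_sqrt (by positivity)

lemma frobNorm_conjTranspose (M : Matrix m n ℂ) : frobNorm Mᴴ = frobNorm M := by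
  rw [frobNorm, frobNorm, Finset.sum_comm]
  simp

lemma frobNorm_fromRows (A : Matrix m₁ n ℂ) (B : Matrix m₂ n ℂ) :
    frobNorm (fromRows A B) = √(frobNorm A ^ 2 + frobNorm B ^ 2) := by
  rw [frobNorm_sq, frobNorm_sq, frobNorm, Fintype.sum_sum_type]
  rfl

lemma frobNorm_sq_eq_sum_norm_sq_col (M : Matrix m n ℂ) :
    frobNorm M ^ 2 = ∑ j, ‖WithLp.toLp 2 (fun i => M i j)‖ ^ 2 := by
  simp only [frobNorm_sq, EuclideanSpace.norm_sq_eq]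
  exact Finset.sum_comm

lemma frobNorm_mul_le_l2_opNorm_mul [DecidableEq m] (A : Matrix l m ℂ) (B : Matrix m n ℂ) :
    frobNorm (A * B) ≤ ‖A‖ * frobNorm B := by
  rw [← sq_le_sq₀ (frobNorm_nonneg _) (mul_nonneg (norm_nonneg A) (frobNorm_nonneg B)),
    mul_pow, frobNorm_sq_eq_sum_norm_sq_col, frobNorm_sq_eq_sum_norm_sq_col, Finset.mul_sum]
  refine Finset.sum_le_sum fun j _ => ?_
  rw [← mul_pow]
  exact pow_le_pow_left₀ (norm_nonneg _) (A.l2_opNorm_mulVec (WithLp.toLp 2 fun i => B i j)) 2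

lemma frobNorm_mul_le_mul_l2_opNorm [DecidableEq n] (A : Matrix l m ℂ) (B : Matrix m n ℂ) :
    frobNorm (A * B) ≤ frobNorm A * ‖B‖ := by
  classical
  rw [← frobNorm_conjTranspose, conjTranspose_mul, ← l2_opNorm_conjTranspose B, mul_comm,
    ← frobNorm_conjTranspose A]
  exact frobNorm_mul_le_l2_opNorm_mul _ _

lemma frobNorm_mul_le_of_conjTranspose_mul_self_eq_one [DecidableEq m] {U : Matrix l m ℂ}
    (hU : Uᴴ * U = 1) (M : Matrix m n ℂ) : frobNorm (U * M) ≤ frobNorm M :=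
  (frobNorm_mul_le_l2_opNorm_mul U M).trans <| mul_le_of_le_one_left (frobNorm_nonneg M)
    (l2_opNorm_le_one_of_conjTranspose_mul_self_eq_one hU)

lemma mul_frobNorm_le_frobNorm_of_le {g : ℝ} (hg : 0 ≤ g) {M N : Matrix m n ℂ}
    (h : ∀ i j, g * ‖M i j‖ ≤ ‖N i j‖) : g * frobNorm M ≤ frobNorm N := by
  rw [← sq_le_sq₀ (mul_nonneg hg (frobNorm_nonneg M)) (frobNorm_nonneg N), mul_pow, frobNorm_sq,
    frobNorm_sq, Finset.mul_sum]
  refine Finset.sum_le_sum fun i _ => ?_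
  rw [Finset.mul_sum]
  refine Finset.sum_le_sum fun j _ => ?_
  rw [← mul_pow]
  exact pow_le_pow_left₀ (by positivity) (h i j) 2

end Frobenius

section Sylvester

variable {m n κ : Type*} [Fintype m] [Fintype n] [Fintype κ] [DecidableEq m]
  [DecidableEq n]

lemma mul_frobNorm_le_frobNorm_mul_diagonal_sub_diagonal_mul (d : m → ℝ) (e : n → ℝ) {g : ℝ}
    (hg0 : 0 ≤ g) (hg : ∀ i j, g ≤ |e j - d i|) (M : Matrix m n ℂ) :
    g * frobNorm M ≤
      frobNorm (M * diagonal (fun j => (e j : ℂ)) - diagonal (fun i => (d i : ℂ)) * M) := by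
  refine mul_frobNorm_le_frobNorm_of_le hg0 fun i j => ?_
  have hentry : (M * diagonal (fun j => (e j : ℂ)) - diagonal (fun i => (d i : ℂ)) * M) i j =
      ((e j - d i : ℝ) : ℂ) * M i j := by
    simp only [sub_apply, diagonal_mul, mul_diagonal]
    push_cast
    ring
  rw [hentry, norm_mul, Complex.norm_real, Real.norm_eq_abs]
  exact mul_le_mul_of_nonneg_right (hg i j) (norm_nonneg _)

lemma IsHermitian.mul_frobNorm_le_frobNorm_mul_diagonal_sub_mul {A : Matrix m m ℂ}
    (hA : A.IsHermitian) (e : n → ℝ) {g : ℝ} (hg0 : 0 ≤ g)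
    (hg : ∀ i j, g ≤ |e j - hA.eigenvalues i|) (M : Matrix m n ℂ) :
    g * frobNorm M ≤ frobNorm (M * diagonal (fun j => (e j : ℂ)) - A * M) := by
  set U : Matrix m m ℂ := (hA.eigenvectorUnitary : Matrix m m ℂ)
  have hU : U ∈ unitaryGroup m ℂ := hA.eigenvectorUnitary.2
  have hUU : U * Uᴴ = 1 := mem_unitaryGroup_iff.mp hU
  have hdiag : Uᴴ * A * U = diagonal (fun i => (hA.eigenvalues i : ℂ)) := by
    have h := hA.conjStarAlgAut_star_eigenvectorUnitary
    rw [Unitary.conjStarAlgAut_star_apply] at h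
    exact h
  have hM : M = U * (Uᴴ * M) := by rw [← Matrix.mul_assoc, hUU, Matrix.one_mul]
  have hconj : Uᴴ * (M * diagonal (fun j => (e j : ℂ)) - A * M) =
      (Uᴴ * M) * diagonal (fun j => (e j : ℂ)) -
        diagonal (fun i => (hA.eigenvalues i : ℂ)) * (Uᴴ * M) := by
    rw [← hdiag, Matrix.mul_sub, Matrix.mul_assoc, Matrix.mul_assoc, ← hM, Matrix.mul_assoc]
  calc g * frobNorm M ≤ g * frobNorm (Uᴴ * M) := by
        refine mul_le_mul_of_nonneg_left ?_ hg0
        conv_lhs => rw [hM]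
        exact frobNorm_mul_le_of_conjTranspose_mul_self_eq_one ((mem_unitaryGroup_iff').mp hU) _
    _ ≤ frobNorm (Uᴴ * (M * diagonal (fun j => (e j : ℂ)) - A * M)) := by
        rw [hconj]
        exact mul_frobNorm_le_frobNorm_mul_diagonal_sub_diagonal_mul _ e hg0 hg _
    _ ≤ frobNorm (M * diagonal (fun j => (e j : ℂ)) - A * M) :=
        frobNorm_mul_le_of_conjTranspose_mul_self_eq_one (by rwa [conjTranspose_conjTranspose]) _

lemma mul_frobNorm_le_of_diagonal_mul_add_mul_eq_mul_diagonal [DecidableEq κ] (d : m → ℝ)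
    (e : n → ℝ) {g : ℝ} (hg0 : 0 ≤ g) (hg : ∀ i j, g ≤ |e j - d i|) {Y : Matrix m n ℂ}
    {B : Matrix m κ ℂ} {Z : Matrix κ n ℂ}
    (h : diagonal (fun i => (d i : ℂ)) * Y + B * Z = Y * diagonal (fun j => (e j : ℂ))) :
    g * frobNorm Y ≤ ‖B‖ * frobNorm Z :=
  calc g * frobNorm Y
      ≤ frobNorm (Y * diagonal (fun j => (e j : ℂ)) - diagonal (fun i => (d i : ℂ)) * Y) :=
        mul_frobNorm_le_frobNorm_mul_diagonal_sub_diagonal_mul d e hg0 hg Y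
    _ = frobNorm (B * Z) := by rw [← h, add_sub_cancel_left]
    _ ≤ ‖B‖ * frobNorm Z := frobNorm_mul_le_l2_opNorm_mul B Z

lemma IsHermitian.mul_frobNorm_le_of_mul_add_mul_eq_mul_diagonal {A : Matrix m m ℂ}
    (hA : A.IsHermitian) (e : n → ℝ) {g : ℝ} (hg0 : 0 ≤ g)
    (hg : ∀ i j, g ≤ |e j - hA.eigenvalues i|) {Z : Matrix m n ℂ} {B : Matrix m κ ℂ}
    {C : Matrix κ n ℂ} (h : B * C + A * Z = Z * diagonal (fun j => (e j : ℂ))) :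
    g * frobNorm Z ≤ frobNorm B * ‖C‖ :=
  calc g * frobNorm Z ≤ frobNorm (Z * diagonal (fun j => (e j : ℂ)) - A * Z) :=
        hA.mul_frobNorm_le_frobNorm_mul_diagonal_sub_mul e hg0 hg Z
    _ = frobNorm (B * C) := by rw [← h, add_sub_cancel_right]
    _ ≤ frobNorm B * ‖C‖ := frobNorm_mul_le_mul_l2_opNorm B C

end Sylvester

end Matrix

lemma iInf_iInf_abs_sub_le {ι κ : Type*} (f : ι → ℝ) (g : κ → ℝ) (i : ι) (j : κ) :
    ⨅ i, ⨅ j, |f i - g j| ≤ |f i - g j| := by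
  have hbdd : ∀ i, BddBelow (Set.range fun j => |f i - g j|) := fun i =>
    ⟨0, by rintro _ ⟨j, rfl⟩; exact abs_nonneg _⟩
  refine (ciInf_le ⟨0, ?_⟩ i).trans (ciInf_le (hbdd i) j)
  rintro _ ⟨i, rfl⟩
  exact Real.iInf_nonneg fun j => abs_nonneg _

lemma sqrt_sq_add_sq_le_of_mul_le {y z r b G g : ℝ} (hy : 0 ≤ y) (hz : 0 ≤ z) (hG : 0 < G)
    (hg : 0 < g) (hyz : g * y ≤ b * z) (hzr : G * z ≤ r) :
    √(y ^ 2 + z ^ 2) ≤ r / G * √(1 + b ^ 2 / g ^ 2) := by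
  have hy' : y ≤ b * z / g := (le_div_iff₀' hg).mpr hyz
  have hz' : z ≤ r / G := (le_div_iff₀' hG).mpr hzr
  rw [← Real.sqrt_sq (hz.trans hz'), ← Real.sqrt_mul (sq_nonneg _)]
  refine Real.sqrt_le_sqrt ?_
  calc y ^ 2 + z ^ 2 ≤ (b * z / g) ^ 2 + z ^ 2 := by gcongr
    _ = z ^ 2 * (1 + b ^ 2 / g ^ 2) := by field_simp; ring
    _ ≤ (r / G) ^ 2 * (1 + b ^ 2 / g ^ 2) := by gcongr

theorem subspace_bound_frobenius_general
    {k n k₁ : ℕ}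
    (lamhat1 : Fin k₁ → ℝ) (lamhat2 : Fin (k - k₁) → ℝ)
    (R : Matrix (Fin (n - k)) (Fin k₁ ⊕ Fin (k - k₁)) ℂ)
    (A3 : Matrix (Fin (n - k)) (Fin (n - k)) ℂ) (hA3 : A3.IsHermitian)
    (X : Matrix ((Fin k₁ ⊕ Fin (k - k₁)) ⊕ Fin (n - k)) (Fin k₁) ℂ)
    (hX : Xᴴ * X = 1)
    (Lam1 : Fin k₁ → ℝ)
    (heig :
      (Matrix.fromBlocks
          (Matrix.diagonal fun i => Complex.ofReal (Sum.elim lamhat1 lamhat2 i))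
          Rᴴ R A3) * X = X * Matrix.diagonal fun i => Complex.ofReal (Lam1 i))
    (Gap gap : ℝ)
    (hGapDef : Gap = ⨅ i, ⨅ j, |Lam1 i - hA3.eigenvalues j|)
    (hgapDef : gap = ⨅ i, ⨅ j, |Lam1 i - lamhat2 j|)
    (hGap : 0 < Gap) (hgap : 0 < gap) :
    frobNorm (X.submatrix (Sum.elim (fun i => Sum.inl (Sum.inr i)) Sum.inr) id) ≤
      (frobNorm R / Gap) * Real.sqrt (1 + ‖R.submatrix id Sum.inr‖ ^ 2 / gap ^ 2) := by
  rw [← fromRows_toRows X, fromBlocks_mul_fromRows, fromRows_mul] at heig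
  obtain ⟨htop, hbot⟩ := fromRows_inj heig
  have hY : (diagonal fun j => (lamhat2 j : ℂ)) * X.toRows₁.toRows₂ +
      (R.submatrix id Sum.inr)ᴴ * X.toRows₂ =
        X.toRows₁.toRows₂ * diagonal fun i => (Lam1 i : ℂ) := by
    ext j i
    have h := congrFun₂ htop (Sum.inr j) i
    rw [Matrix.add_apply, diagonal_mul, mul_diagonal] at h
    rw [Matrix.add_apply, diagonal_mul, mul_diagonal]
    exact h
  have hZ : Gap * frobNorm X.toRows₂ ≤ frobNorm R :=
    (hA3.mul_frobNorm_le_of_mul_add_mul_eq_mul_diagonal Lam1 hGap.le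
      (fun j i => hGapDef.trans_le (iInf_iInf_abs_sub_le _ _ i j)) hbot).trans
      (mul_le_of_le_one_right (frobNorm_nonneg R) ((l2_opNorm_toRows₁_le X).trans
        (l2_opNorm_le_one_of_conjTranspose_mul_self_eq_one hX)))
  have hYZ :
      gap * frobNorm X.toRows₁.toRows₂ ≤ ‖R.submatrix id Sum.inr‖ * frobNorm X.toRows₂ := by
    simpa only [l2_opNorm_conjTranspose] using
      mul_frobNorm_le_of_diagonal_mul_add_mul_eq_mul_diagonal lamhat2 Lam1 hgap.le
        (fun j i => hgapDef.trans_le (iInf_iInf_abs_sub_le _ _ i j)) hY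
  have hrows : X.submatrix (Sum.elim (fun i => Sum.inl (Sum.inr i)) Sum.inr) id =
      fromRows X.toRows₁.toRows₂ X.toRows₂ := by
    ext (j | p) i <;> rfl
  rw [hrows, frobNorm_fromRows]
  exact sqrt_sq_add_sq_le_of_mul_le (frobNorm_nonneg _) (frobNorm_nonneg _) hGap hgap hYZ hZ

/-- Theorem 5.1, bound (5.2) (Frobenius-norm version) of the paper:
`‖[Y; Z]‖_F ≤ (‖R‖_F/Gap) · √(1 + ‖R₂‖²/gap²)`. -/
theorem subspace_bound_frobenius
    {k n k₁ : ℕ} (hk : 2 ≤ k) (hkn : k ≤ n) (hk₁ : 1 ≤ k₁) (hk₁k : k₁ < k)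
    (lamhat1 : Fin k₁ → ℝ) (lamhat2 : Fin (k - k₁) → ℝ)
    (R : Matrix (Fin (n - k)) (Fin k₁ ⊕ Fin (k - k₁)) ℂ)
    (A3 : Matrix (Fin (n - k)) (Fin (n - k)) ℂ) (hA3 : A3.IsHermitian)
    (X : Matrix ((Fin k₁ ⊕ Fin (k - k₁)) ⊕ Fin (n - k)) (Fin k₁) ℂ)
    (hX : Xᴴ * X = 1)
    (Lam1 : Fin k₁ → ℝ)
    (heig :
      (Matrix.fromBlocks
          (Matrix.diagonal fun i => Complex.ofReal (Sum.elim lamhat1 lamhat2 i))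
          Rᴴ R A3) * X = X * Matrix.diagonal fun i => Complex.ofReal (Lam1 i))
    (Gap gap : ℝ)
    (hGapDef : Gap = ⨅ i, ⨅ j, |Lam1 i - hA3.eigenvalues j|)
    (hgapDef : gap = ⨅ i, ⨅ j, |Lam1 i - lamhat2 j|)
    (hGap : 0 < Gap) (hgap : 0 < gap) :
    frobNorm (X.submatrix (Sum.elim (fun i => Sum.inl (Sum.inr i)) Sum.inr) id) ≤
      (frobNorm R / Gap) * Real.sqrt (1 + ‖R.submatrix id Sum.inr‖ ^ 2 / gap ^ 2) :=
  subspace_bound_frobenius_general lamhat1 lamhat2 R A3 hA3 X hX Lam1 heig Gap gap hGapDef hgapDef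
    hGap hgap
end

section
/- Let Ã ∈ ℂ^{m×n} be of the 3×3 block form Ã = [[Σ̂₁, 0, R₁],[0, Σ̂₂, R₂],[S₁, S₂, A₃]] as described, and let (Σ₁, Ũ₁, Ṽ₁) be exact singular triplets: ÃṼ₁ = Ũ₁Σ₁ and Ã*Ũ₁ = Ṽ₁Σ₁, with Ũ₁, Ṽ₁ having orthonormal columns and Σ₁ real diagonal with positive diagonal entries, partitioned conformally as Ũ₁ = (Ũ₁₁; Ũ₂₁; Ũ₃₁), Ṽ₁ = (Ṽ₁₁; Ṽ₂₁; Ṽ₃₁). If gap := σ_min(Σ₁) − ‖Σ̂₂‖ > 0, then max(‖Ũ₂₁‖, ‖Ṽ₂₁‖) ≤ (max(‖R₂‖, ‖S₂‖)/gap) · max(‖Ũ₃₁‖, ‖Ṽ₃₁‖). -/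
open Matrix
open scoped Matrix.Norms.L2Operator

/-!
Reading off the middle block rows of `Ã Ṽ₁ = Ũ₁ Σ₁` and `Ã* Ũ₁ = Ṽ₁ Σ₁` gives the coupled equations
`Ũ₂₁ Σ₁ = Σ̂₂ Ṽ₂₁ + R₂ Ṽ₃₁` and `Ṽ₂₁ Σ₁ = Σ̂₂* Ũ₂₁ + S₂* Ũ₃₁`. Since right multiplication by `Σ₁`
stretches every matrix by at least `σ_min(Σ₁)`, taking norms gives
`σ_min(Σ₁) · max(‖Ũ₂₁‖, ‖Ṽ₂₁‖) ≤ ‖Σ̂₂‖ · max(‖Ũ₂₁‖, ‖Ṽ₂₁‖) + max(‖R₂‖, ‖S₂‖) · max(‖Ũ₃₁‖, ‖Ṽ₃₁‖)`,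
and the gap is moved to the left.
-/

theorem submatrix_inl_inr_fromBlocks_fromBlocks_mul {α : Type*} [NonUnitalNonAssocSemiring α]
    {m₁ m₂ m₃ n₁ n₂ n₃ k : Type*} [Fintype n₁] [Fintype n₂] [Fintype n₃]
    (A₁ : Matrix m₁ n₁ α) (T : Matrix m₂ n₂ α) (R : Matrix (m₁ ⊕ m₂) n₃ α)
    (S : Matrix m₃ (n₁ ⊕ n₂) α) (A₃ : Matrix m₃ n₃ α) (V : Matrix ((n₁ ⊕ n₂) ⊕ n₃) k α) :
    (fromBlocks (fromBlocks A₁ 0 0 T) R S A₃ * V).submatrix (fun i => Sum.inl (Sum.inr i)) id =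
      T * V.submatrix (fun i => Sum.inl (Sum.inr i)) id +
        R.submatrix Sum.inr id * V.submatrix Sum.inr id := by
  ext i j
  simp [mul_apply, Fintype.sum_sum_type]

section L2OpNorm

variable {𝕜 : Type*} [RCLike 𝕜] {ι κ : Type*} [Fintype ι] [Fintype κ] [DecidableEq κ]

theorem mul_l2_opNorm_le_l2_opNorm_mul_diagonal (X : Matrix ι κ 𝕜) {σ : κ → ℝ} {s : ℝ}
    (hσ : ∀ i, s ≤ σ i) : s * ‖X‖ ≤ ‖X * diagonal (fun i => (σ i : 𝕜))‖ := by
  rcases le_or_gt s 0 with hs | hs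
  · exact (mul_nonpos_of_nonpos_of_nonneg hs (norm_nonneg _)).trans (norm_nonneg _)
  have hσ0 : ∀ i, (σ i : 𝕜) ≠ 0 := fun i => RCLike.ofReal_ne_zero.mpr (hs.trans_le (hσ i)).ne'
  have hinv : ‖(diagonal fun i => (σ i : 𝕜)⁻¹ : Matrix κ κ 𝕜)‖ ≤ s⁻¹ := by
    rw [l2_opNorm_diagonal, pi_norm_le_iff_of_nonneg (inv_nonneg.mpr hs.le)]
    intro i
    rw [norm_inv, RCLike.norm_ofReal, abs_of_pos (hs.trans_le (hσ i))]
    exact inv_anti₀ hs (hσ i)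
  have hX : X = X * diagonal (fun i => (σ i : 𝕜)) * diagonal fun i => (σ i : 𝕜)⁻¹ := by
    rw [Matrix.mul_assoc, diagonal_mul_diagonal]
    simp [hσ0]
  calc s * ‖X‖
      ≤ s * (‖X * diagonal (fun i => (σ i : 𝕜))‖ * s⁻¹) := by
        gcongr
        conv_lhs => rw [hX]
        exact (l2_opNorm_mul _ _).trans (by gcongr)
    _ = ‖X * diagonal (fun i => (σ i : 𝕜))‖ := by field_simp

theorem mul_l2_opNorm_le_of_mul_diagonal_eq {l₁ l₂ : Type*} [Fintype l₁] [Fintype l₂]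
    [DecidableEq l₁] [DecidableEq l₂]
    {X : Matrix ι κ 𝕜} {B : Matrix ι l₁ 𝕜} {Y : Matrix l₁ κ 𝕜} {C : Matrix ι l₂ 𝕜}
    {Z : Matrix l₂ κ 𝕜} {σ : κ → ℝ} {s : ℝ} (hσ : ∀ i, s ≤ σ i)
    (h : X * diagonal (fun i => (σ i : 𝕜)) = B * Y + C * Z) :
    s * ‖X‖ ≤ ‖B‖ * ‖Y‖ + ‖C‖ * ‖Z‖ :=
  calc s * ‖X‖ ≤ ‖B * Y + C * Z‖ := h ▸ mul_l2_opNorm_le_l2_opNorm_mul_diagonal X hσ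
    _ ≤ ‖B * Y‖ + ‖C * Z‖ := norm_add_le _ _
    _ ≤ ‖B‖ * ‖Y‖ + ‖C‖ * ‖Z‖ := add_le_add (l2_opNorm_mul _ _) (l2_opNorm_mul _ _)

theorem sub_mul_max_le_of_coupled_eq {m₂ n₂ m₃ n₃ : Type*} [Fintype m₂] [Fintype n₂]
    [Fintype m₃] [Fintype n₃] [DecidableEq m₂] [DecidableEq n₂] [DecidableEq m₃] [DecidableEq n₃]
    {T : Matrix m₂ n₂ 𝕜} {R : Matrix m₂ n₃ 𝕜} {S : Matrix m₃ n₂ 𝕜}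
    {U₂ : Matrix m₂ κ 𝕜} {V₂ : Matrix n₂ κ 𝕜} {U₃ : Matrix m₃ κ 𝕜} {V₃ : Matrix n₃ κ 𝕜}
    {σ : κ → ℝ} {s : ℝ} (hσ : ∀ i, s ≤ σ i)
    (hU : U₂ * diagonal (fun i => (σ i : 𝕜)) = T * V₂ + R * V₃)
    (hV : V₂ * diagonal (fun i => (σ i : 𝕜)) = Tᴴ * U₂ + Sᴴ * U₃) :
    (s - ‖T‖) * max ‖U₂‖ ‖V₂‖ ≤ max ‖R‖ ‖S‖ * max ‖U₃‖ ‖V₃‖ := by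
  have hU' := mul_l2_opNorm_le_of_mul_diagonal_eq hσ hU
  have hV' := mul_l2_opNorm_le_of_mul_diagonal_eq hσ hV
  rw [l2_opNorm_conjTranspose, l2_opNorm_conjTranspose] at hV'
  have hR : ‖R‖ * ‖V₃‖ ≤ max ‖R‖ ‖S‖ * max ‖U₃‖ ‖V₃‖ := by gcongr <;> simp
  have hS : ‖S‖ * ‖U₃‖ ≤ max ‖R‖ ‖S‖ * max ‖U₃‖ ‖V₃‖ := by gcongr <;> simp
  have hV₂ : ‖T‖ * ‖V₂‖ ≤ ‖T‖ * max ‖U₂‖ ‖V₂‖ := by gcongr; simp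
  have hU₂ : ‖T‖ * ‖U₂‖ ≤ ‖T‖ * max ‖U₂‖ ‖V₂‖ := by gcongr; simp
  rcases max_choice ‖U₂‖ ‖V₂‖ with h | h <;> rw [h] at hU₂ hV₂ ⊢ <;> linarith

end L2OpNorm

theorem svd_middle_block_bound_general
    {m n k₁ km kn : ℕ}
    (σ1hat : Fin k₁ → ℝ)
    (Sig2hat : Matrix (Fin (km - k₁)) (Fin (kn - k₁)) ℂ)
    (R : Matrix (Fin k₁ ⊕ Fin (km - k₁)) (Fin (n - kn)) ℂ)
    (S : Matrix (Fin (m - km)) (Fin k₁ ⊕ Fin (kn - k₁)) ℂ)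
    (A3 : Matrix (Fin (m - km)) (Fin (n - kn)) ℂ)
    (U : Matrix ((Fin k₁ ⊕ Fin (km - k₁)) ⊕ Fin (m - km)) (Fin k₁) ℂ)
    (V : Matrix ((Fin k₁ ⊕ Fin (kn - k₁)) ⊕ Fin (n - kn)) (Fin k₁) ℂ)
    (σ1 : Fin k₁ → ℝ)
    (hAV :
      (Matrix.fromBlocks
          (Matrix.fromBlocks (Matrix.diagonal fun i => Complex.ofReal (σ1hat i)) 0 0 Sig2hat)
          R S A3) * V = U * Matrix.diagonal fun i => Complex.ofReal (σ1 i))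
    (hAU :
      (Matrix.fromBlocks
          (Matrix.fromBlocks (Matrix.diagonal fun i => Complex.ofReal (σ1hat i)) 0 0 Sig2hat)
          R S A3)ᴴ * U = V * Matrix.diagonal fun i => Complex.ofReal (σ1 i))
    (gap : ℝ)
    (hgapDef : gap = (⨅ i, σ1 i) - ‖Sig2hat‖)
    (hgap : 0 < gap) :
    max ‖U.submatrix (fun i => Sum.inl (Sum.inr i) :
            Fin (km - k₁) → (Fin k₁ ⊕ Fin (km - k₁)) ⊕ Fin (m - km)) id‖
        ‖V.submatrix (fun i => Sum.inl (Sum.inr i) :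
            Fin (kn - k₁) → (Fin k₁ ⊕ Fin (kn - k₁)) ⊕ Fin (n - kn)) id‖ ≤
      (max ‖R.submatrix Sum.inr id‖ ‖S.submatrix id Sum.inr‖ / gap) *
        max ‖U.submatrix (Sum.inr : Fin (m - km) → _) id‖
          ‖V.submatrix (Sum.inr : Fin (n - kn) → _) id‖ := by
  have hU := congrArg (submatrix · (fun i => Sum.inl (Sum.inr i)) id) hAV
  have hV := congrArg (submatrix · (fun i => Sum.inl (Sum.inr i)) id) hAU
  simp only [fromBlocks_conjTranspose, conjTranspose_zero] at hV
  rw [submatrix_inl_inr_fromBlocks_fromBlocks_mul, submatrix_mul _ _ _ id _ Function.bijective_id,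
    submatrix_id_id] at hU hV
  rw [← conjTranspose_submatrix] at hV
  have hσ : ∀ i, ⨅ j, σ1 j ≤ σ1 i := ciInf_le (Finite.bddBelow_range σ1)
  have hbound := sub_mul_max_le_of_coupled_eq hσ hU.symm hV.symm
  rw [div_mul_eq_mul_div, le_div_iff₀ hgap, mul_comm, hgapDef]
  exact hbound

/-- Bound (6.17) of the paper: if `gap = σ_min(Σ₁) − ‖Σ̂₂‖ > 0`, then
`max(‖Ũ₂₁‖,‖Ṽ₂₁‖) ≤ (max(‖R₂‖,‖S₂‖)/gap)·max(‖Ũ₃₁‖,‖Ṽ₃₁‖)`. -/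
theorem svd_middle_block_bound
    {m n k₁ km kn : ℕ} (hmn : n ≤ m) (hk₁ : 1 ≤ k₁)
    (hk₁km : k₁ ≤ km) (hkmm : km ≤ m) (hk₁kn : k₁ ≤ kn) (hknn : kn ≤ n)
    (σ1hat : Fin k₁ → ℝ) (hσ1hat : ∀ i, 0 ≤ σ1hat i)
    (Sig2hat : Matrix (Fin (km - k₁)) (Fin (kn - k₁)) ℂ)
    (hSig2off : ∀ (i : Fin (km - k₁)) (j : Fin (kn - k₁)), (i : ℕ) ≠ (j : ℕ) → Sig2hat i j = 0)
    (hSig2diag : ∀ (i : Fin (km - k₁)) (j : Fin (kn - k₁)), (i : ℕ) = (j : ℕ) →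
      ∃ r : ℝ, 0 ≤ r ∧ Sig2hat i j = (r : ℂ))
    (R : Matrix (Fin k₁ ⊕ Fin (km - k₁)) (Fin (n - kn)) ℂ)
    (S : Matrix (Fin (m - km)) (Fin k₁ ⊕ Fin (kn - k₁)) ℂ)
    (A3 : Matrix (Fin (m - km)) (Fin (n - kn)) ℂ)
    (U : Matrix ((Fin k₁ ⊕ Fin (km - k₁)) ⊕ Fin (m - km)) (Fin k₁) ℂ)
    (V : Matrix ((Fin k₁ ⊕ Fin (kn - k₁)) ⊕ Fin (n - kn)) (Fin k₁) ℂ)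
    (hU : Uᴴ * U = 1) (hV : Vᴴ * V = 1)
    (σ1 : Fin k₁ → ℝ) (hσ1 : ∀ i, 0 < σ1 i)
    (hAV :
      (Matrix.fromBlocks
          (Matrix.fromBlocks (Matrix.diagonal fun i => Complex.ofReal (σ1hat i)) 0 0 Sig2hat)
          R S A3) * V = U * Matrix.diagonal fun i => Complex.ofReal (σ1 i))
    (hAU :
      (Matrix.fromBlocks
          (Matrix.fromBlocks (Matrix.diagonal fun i => Complex.ofReal (σ1hat i)) 0 0 Sig2hat)
          R S A3)ᴴ * U = V * Matrix.diagonal fun i => Complex.ofReal (σ1 i))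
    (gap : ℝ)
    (hgapDef : gap = (⨅ i, σ1 i) - ‖Sig2hat‖)
    (hgap : 0 < gap) :
    max ‖U.submatrix (fun i => Sum.inl (Sum.inr i) :
            Fin (km - k₁) → (Fin k₁ ⊕ Fin (km - k₁)) ⊕ Fin (m - km)) id‖
        ‖V.submatrix (fun i => Sum.inl (Sum.inr i) :
            Fin (kn - k₁) → (Fin k₁ ⊕ Fin (kn - k₁)) ⊕ Fin (n - kn)) id‖ ≤
      (max ‖R.submatrix Sum.inr id‖ ‖S.submatrix id Sum.inr‖ / gap) *
        max ‖U.submatrix (Sum.inr : Fin (m - km) → _) id‖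
          ‖V.submatrix (Sum.inr : Fin (n - kn) → _) id‖ :=
  svd_middle_block_bound_general σ1hat Sig2hat R S A3 U V σ1 hAV hAU gap hgapDef hgap
end

section
/- Let H be a complex Hilbert space, A : H → H a bounded self-adjoint operator, and P₁, P₂, P₃ orthogonal projections with mutually orthogonal ranges satisfying P₁ + P₂ + P₃ = I and P₁ ∘ A ∘ P₂ = 0. Suppose u ∈ H is a unit vector with Au = λu for some real λ, and set uᵢ := Pᵢu for i = 1, 2, 3. Assume there are constants gap > 0 and Gap > 0 such that ‖P₂(Av) − λv‖ ≥ gap·‖v‖ for all v in the range of P₂, and ‖P₃(Av) − λv‖ ≥ Gap·‖v‖ for all v in the range of P₃. Set ‖R‖ := ‖P₃ ∘ A ∘ (P₁ + P₂)‖ and ‖R₂‖ := ‖P₃ ∘ A ∘ P₂‖ (operator norms). Then √(‖u₂‖² + ‖u₃‖²) ≤ (‖R‖/Gap) · √(1 + ‖R₂‖²/gap²). -/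
/-!
Compressing the eigen-equation `A u = λ u` with `P₃` gives `(P₃ A - λ) u₃ = -P₃ A (P₁ + P₂) u`,
so `Gap ‖u₃‖ ≤ ‖R‖`. Compressing it with `P₂`, where `P₂ A P₁ = (P₁ A P₂)⋆ = 0`, gives
`(P₂ A - λ) u₂ = -(P₂ A P₃) u₃`, so `gap ‖u₂‖ ≤ ‖R₂⋆‖ ‖u₃‖ = ‖R₂‖ ‖u₃‖`. Hence
`‖u₂‖² + ‖u₃‖² ≤ (1 + ‖R₂‖² / gap²) ‖u₃‖² ≤ (1 + ‖R₂‖² / gap²) (‖R‖ / Gap)²`.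
-/

theorem IsSelfAdjoint.star_mul_mul {R : Type*} [Monoid R] [StarMul R] {p a q : R}
    (hp : IsSelfAdjoint p) (ha : IsSelfAdjoint a) (hq : IsSelfAdjoint q) :
    star (p * (a * q)) = q * (a * p) := by
  rw [star_mul, star_mul, hp.star_eq, ha.star_eq, hq.star_eq, mul_assoc]

theorem LinearMap.mul_norm_apply_le_of_apply_eq_smul {R E : Type*} [Ring R]
    [SeminormedAddCommGroup E] [Module R E] (A P : E →ₗ[R] E) {c : R} {u : E}
    (hu : A u = c • u) {g : ℝ} (hg : ∀ v ∈ Set.range ⇑P, g * ‖v‖ ≤ ‖P (A v) - c • v‖) :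
    g * ‖P u‖ ≤ ‖P (A (u - P u))‖ := by
  have hcompress : P (A (P u)) - c • P u = -P (A (u - P u)) := by
    rw [← map_smul, ← hu, ← map_sub, ← map_sub, ← map_neg, ← map_neg, neg_sub]
  simpa only [hcompress, norm_neg] using hg (P u) ⟨u, rfl⟩

theorem Real.sqrt_sq_add_sq_le_mul_sqrt_one_add_sq {a b s t : ℝ} (ha : 0 ≤ a) (hb : 0 ≤ b)
    (hbs : b ≤ s) (hab : a ≤ t * b) :
    √(a ^ 2 + b ^ 2) ≤ s * √(1 + t ^ 2) := by
  have hs : 0 ≤ s := hb.trans hbs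
  have hsq : a ^ 2 + b ^ 2 ≤ s ^ 2 * (1 + t ^ 2) := by
    have ha2 : a ^ 2 ≤ (t * b) ^ 2 := pow_le_pow_left₀ ha hab 2
    have hb2 : b ^ 2 ≤ s ^ 2 := pow_le_pow_left₀ hb hbs 2
    nlinarith [sq_nonneg t]
  calc √(a ^ 2 + b ^ 2) ≤ √(s ^ 2 * (1 + t ^ 2)) := Real.sqrt_le_sqrt hsq
    _ = s * √(1 + t ^ 2) := by rw [Real.sqrt_mul (sq_nonneg s), Real.sqrt_sq hs]

theorem selfadjoint_ritz_bound_general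
    {H : Type*} [NormedAddCommGroup H] [InnerProductSpace ℂ H] [CompleteSpace H]
    (A : H →L[ℂ] H) (hA : IsSelfAdjoint A)
    (P₁ P₂ P₃ : H →L[ℂ] H)
    (hP₁sa : IsSelfAdjoint P₁) (hP₂sa : IsSelfAdjoint P₂) (hP₃sa : IsSelfAdjoint P₃)
    (hP₃idem : P₃ ∘L P₃ = P₃)
    (hsum : P₁ + P₂ + P₃ = 1)
    (hRR : P₁ ∘L A ∘L P₂ = 0)
    (u : H) (hu : ‖u‖ = 1) (lam : ℝ) (hAu : A u = (lam : ℂ) • u)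
    (gap Gap : ℝ) (hgap : 0 < gap) (hGap : 0 < Gap)
    (hgapb : ∀ v ∈ Set.range ⇑P₂, gap * ‖v‖ ≤ ‖P₂ (A v) - (lam : ℂ) • v‖)
    (hGapb : ∀ v ∈ Set.range ⇑P₃, Gap * ‖v‖ ≤ ‖P₃ (A v) - (lam : ℂ) • v‖) :
    Real.sqrt (‖P₂ u‖ ^ 2 + ‖P₃ u‖ ^ 2) ≤
      (‖P₃ ∘L A ∘L (P₁ + P₂)‖ / Gap) *
        Real.sqrt (1 + ‖P₃ ∘L A ∘L P₂‖ ^ 2 / gap ^ 2) := by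
  have hdecomp : P₁ u + P₂ u + P₃ u = u := by simpa using congr($hsum u)
  have hP₂AP₁ : P₂ ∘L A ∘L P₁ = 0 := by
    calc P₂ ∘L A ∘L P₁ = star (P₁ ∘L A ∘L P₂) := (hP₁sa.star_mul_mul hA hP₂sa).symm
      _ = 0 := by rw [hRR, star_zero]
  have hR₂ : ‖P₂ ∘L A ∘L P₃‖ = ‖P₃ ∘L A ∘L P₂‖ := by
    rw [← norm_star (P₃ ∘L A ∘L P₂)]
    exact congrArg norm (hP₃sa.star_mul_mul hA hP₂sa).symm
  have hu₃ : Gap * ‖P₃ u‖ ≤ ‖P₃ ∘L A ∘L (P₁ + P₂)‖ := by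
    calc Gap * ‖P₃ u‖ ≤ ‖P₃ (A (u - P₃ u))‖ :=
          (A : H →ₗ[ℂ] H).mul_norm_apply_le_of_apply_eq_smul P₃ hAu hGapb
      _ = ‖(P₃ ∘L A ∘L (P₁ + P₂)) u‖ := by rw [← eq_sub_of_add_eq hdecomp]; rfl
      _ ≤ ‖P₃ ∘L A ∘L (P₁ + P₂)‖ := (P₃ ∘L A ∘L (P₁ + P₂)).unit_le_opNorm u hu.le
  have hu₂ : gap * ‖P₂ u‖ ≤ ‖P₃ ∘L A ∘L P₂‖ * ‖P₃ u‖ := by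
    have hu₁₃ : u - P₂ u = P₁ u + P₃ u :=
      sub_eq_of_eq_add (by rw [add_right_comm]; exact hdecomp.symm)
    calc gap * ‖P₂ u‖ ≤ ‖P₂ (A (u - P₂ u))‖ :=
          (A : H →ₗ[ℂ] H).mul_norm_apply_le_of_apply_eq_smul P₂ hAu hgapb
      _ = ‖(P₂ ∘L A ∘L P₃) (P₃ u)‖ := by
        have hP₂AP₁u : P₂ (A (P₁ u)) = 0 := congr($hP₂AP₁ u)
        have hP₃u : P₃ (P₃ u) = P₃ u := congr($hP₃idem u)
        rw [hu₁₃, map_add, map_add, hP₂AP₁u, zero_add, ContinuousLinearMap.comp_apply,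
          ContinuousLinearMap.comp_apply, hP₃u]
      _ ≤ ‖P₃ ∘L A ∘L P₂‖ * ‖P₃ u‖ := hR₂ ▸ (P₂ ∘L A ∘L P₃).le_opNorm (P₃ u)
  refine div_pow (‖P₃ ∘L A ∘L P₂‖) gap 2 ▸
    Real.sqrt_sq_add_sq_le_mul_sqrt_one_add_sq (norm_nonneg _) (norm_nonneg _) ?_ ?_
  · rwa [le_div_iff₀ hGap, mul_comm]
  · rwa [div_mul_eq_mul_div, le_div_iff₀ hgap, mul_comm]

/-- Theorem 7.1, bound (7.1) of the paper (self-adjoint operator on a Hilbert space):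
`√(‖u₂‖² + ‖u₃‖²) ≤ (‖R‖/Gap) · √(1 + ‖R₂‖²/gap²)`. -/
theorem selfadjoint_ritz_bound
    {H : Type*} [NormedAddCommGroup H] [InnerProductSpace ℂ H] [CompleteSpace H]
    (A : H →L[ℂ] H) (hA : IsSelfAdjoint A)
    (P₁ P₂ P₃ : H →L[ℂ] H)
    (hP₁sa : IsSelfAdjoint P₁) (hP₂sa : IsSelfAdjoint P₂) (hP₃sa : IsSelfAdjoint P₃)
    (hP₁idem : P₁ ∘L P₁ = P₁) (hP₂idem : P₂ ∘L P₂ = P₂) (hP₃idem : P₃ ∘L P₃ = P₃)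
    (hP₁₂ : P₁ ∘L P₂ = 0) (hP₁₃ : P₁ ∘L P₃ = 0) (hP₂₃ : P₂ ∘L P₃ = 0)
    (hsum : P₁ + P₂ + P₃ = 1)
    (hRR : P₁ ∘L A ∘L P₂ = 0)
    (u : H) (hu : ‖u‖ = 1) (lam : ℝ) (hAu : A u = (lam : ℂ) • u)
    (gap Gap : ℝ) (hgap : 0 < gap) (hGap : 0 < Gap)
    (hgapb : ∀ v ∈ Set.range ⇑P₂, gap * ‖v‖ ≤ ‖P₂ (A v) - (lam : ℂ) • v‖)
    (hGapb : ∀ v ∈ Set.range ⇑P₃, Gap * ‖v‖ ≤ ‖P₃ (A v) - (lam : ℂ) • v‖) :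
    Real.sqrt (‖P₂ u‖ ^ 2 + ‖P₃ u‖ ^ 2) ≤
      (‖P₃ ∘L A ∘L (P₁ + P₂)‖ / Gap) *
        Real.sqrt (1 + ‖P₃ ∘L A ∘L P₂‖ ^ 2 / gap ^ 2) :=
  selfadjoint_ritz_bound_general A hA P₁ P₂ P₃ hP₁sa hP₂sa hP₃sa hP₃idem hsum hRR u hu lam hAu gap
    Gap hgap hGap hgapb hGapb
end

section
/- Let H be a complex Hilbert space, A : H → H a bounded self-adjoint operator, and P₁, P₂, P₃ orthogonal projections with mutually orthogonal ranges satisfying P₁ + P₂ + P₃ = I and P₁ ∘ A ∘ P₂ = 0. Suppose further that P₂ = Σ_{i=2}^{k} P_{2,i}, where the P_{2,i} are rank-one orthogonal projections with pairwise orthogonal ranges, and that there are real numbers λ̂₂,…,λ̂ₖ with P_{2,i} ∘ A ∘ P₂ = λ̂ᵢ·P_{2,i} for each i. Suppose u ∈ H is a unit vector with Au = λu for some real λ satisfying λ ≠ λ̂ᵢ for all i, and set uᵢ := Pᵢu. Assume there is a constant Gap with ‖P₃(Av) − λv‖ ≥ Gap·‖v‖ for all v in the range of P₃. Set ‖R₁‖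 := ‖P₃ ∘ A ∘ P₁‖ and ‖rᵢ‖ := ‖P₃ ∘ A ∘ P_{2,i}‖ (operator norms). If Gap > Σ_{i=2}^{k} ‖rᵢ‖²/|λ − λ̂ᵢ|, then √(‖u₂‖² + ‖u₃‖²) ≤ (‖R₁‖ / (Gap − Σ_{i=2}^{k} ‖rᵢ‖²/|λ − λ̂ᵢ|)) · √(1 + (Σ_{i=2}^{k} ‖rᵢ‖/|λ − λ̂ᵢ|)²). -/
/-!
Compress the eigen-equation `A u = λ u` by `P_{2,i}`: the `P₁`-part vanishes because
`P₁ A P₂ = 0` and everything is self-adjoint, the `P₂`-part is `λ̂ᵢ P_{2,i} u`, so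
`(λ - λ̂ᵢ) P_{2,i} u = P_{2,i} A P₃ u₃` and `‖P_{2,i} u‖ ≤ ‖rᵢ‖ / |λ - λ̂ᵢ| · ‖u₃‖`, since
`P_{2,i} A P₃` is the adjoint of `rᵢ = P₃ A P_{2,i}`. Compressing by `P₃` instead gives
`P₃ A u₃ - λ u₃ = -(P₃ A P₁ u + P₃ A P₂ u)`, and the gap bound together with the estimates on
the pieces `P_{2,i} u` yields `(Gap - Σ ‖rᵢ‖² / |λ - λ̂ᵢ|) ‖u₃‖ ≤ ‖R₁‖`. Finally
`‖u₂‖ ≤ (Σ ‖rᵢ‖ / |λ - λ̂ᵢ|) ‖u₃‖`.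
-/

namespace ContinuousLinearMap

variable {𝕜 E : Type*} [NormedAddCommGroup E]

section InnerProduct

variable [RCLike 𝕜] [InnerProductSpace 𝕜 E] [CompleteSpace E] {A P Q : E →L[𝕜] E}

theorem adjoint_comp_comp_of_isSelfAdjoint (hA : IsSelfAdjoint A) (hP : IsSelfAdjoint P)
    (hQ : IsSelfAdjoint Q) : adjoint (P ∘L A ∘L Q) = Q ∘L A ∘L P := by
  rw [adjoint_comp, adjoint_comp, hA.adjoint_eq, hP.adjoint_eq, hQ.adjoint_eq, comp_assoc]

theorem norm_comp_comp_comm_of_isSelfAdjoint (hA : IsSelfAdjoint A) (hP : IsSelfAdjoint P)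
    (hQ : IsSelfAdjoint Q) : ‖P ∘L A ∘L Q‖ = ‖Q ∘L A ∘L P‖ := by
  rw [← adjoint_comp_comp_of_isSelfAdjoint hA hP hQ, LinearIsometryEquiv.norm_map]

theorem comp_comp_eq_zero_comm_of_isSelfAdjoint (hA : IsSelfAdjoint A) (hP : IsSelfAdjoint P)
    (hQ : IsSelfAdjoint Q) (h : P ∘L A ∘L Q = 0) : Q ∘L A ∘L P = 0 := by
  rw [← adjoint_comp_comp_of_isSelfAdjoint hA hP hQ, h, map_zero]

end InnerProduct

variable [NontriviallyNormedField 𝕜] [NormedSpace 𝕜 E]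

theorem sum_comp_of_orthogonal {ι : Type*} [Fintype ι] (P : ι → E →L[𝕜] E)
    (hidem : ∀ i, P i ∘L P i = P i) (horth : ∀ i j, i ≠ j → P i ∘L P j = 0) (i : ι) :
    (∑ j, P j) ∘L P i = P i := by
  rw [finsetSum_comp, Finset.sum_eq_single i (fun j _ hji => horth j i hji) (by simp), hidem]

section Eigenvector

variable {A P₁ P₂ P₃ : E →L[𝕜] E} {u : E} {c : 𝕜}

theorem smul_apply_eq_add_of_eigenvector (hsum : P₁ + P₂ + P₃ = 1) (hAu : A u = c • u)
    (Q : E →L[𝕜] E) : c • Q u = Q (A (P₁ u)) + Q (A (P₂ u)) + Q (A (P₃ u)) := by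
  rw [← map_smul, ← hAu, ← map_add, ← map_add, ← map_add, ← map_add, ← add_apply, ← add_apply,
    hsum, one_apply_eq_self]

theorem sub_smul_apply_eq_of_eigenvector (hsum : P₁ + P₂ + P₃ = 1) (hAu : A u = c • u)
    {Q : E →L[𝕜] E} {μ : 𝕜} (h₁ : Q ∘L A ∘L P₁ = 0) (h₂ : Q ∘L A ∘L P₂ = μ • Q) :
    (c - μ) • Q u = Q (A (P₃ u)) := by
  have h₁u : Q (A (P₁ u)) = 0 := by simpa using congr($h₁ u)
  have h₂u : Q (A (P₂ u)) = μ • Q u := by simpa using congr($h₂ u)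
  rw [sub_smul, smul_apply_eq_add_of_eigenvector hsum hAu, h₁u, h₂u]
  abel

theorem norm_apply_le_of_eigenvector (hsum : P₁ + P₂ + P₃ = 1) (hAu : A u = c • u)
    (hP₃ : P₃ ∘L P₃ = P₃) {Q : E →L[𝕜] E} {μ : 𝕜} (hne : c ≠ μ) (h₁ : Q ∘L A ∘L P₁ = 0)
    (h₂ : Q ∘L A ∘L P₂ = μ • Q) :
    ‖Q u‖ ≤ ‖Q ∘L A ∘L P₃‖ / ‖c - μ‖ * ‖P₃ u‖ := by
  have hpos : 0 < ‖c - μ‖ := norm_pos_iff.mpr (sub_ne_zero.mpr hne)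
  have hP₃u : P₃ (P₃ u) = P₃ u := by simpa using congr($hP₃ u)
  rw [div_mul_eq_mul_div, le_div_iff₀ hpos, mul_comm, ← norm_smul,
    sub_smul_apply_eq_of_eigenvector hsum hAu h₁ h₂]
  calc ‖Q (A (P₃ u))‖ = ‖(Q ∘L A ∘L P₃) (P₃ u)‖ := by simp only [comp_apply, hP₃u]
    _ ≤ ‖Q ∘L A ∘L P₃‖ * ‖P₃ u‖ := le_opNorm _ _

theorem norm_apply_sub_smul_le_of_eigenvector (hsum : P₁ + P₂ + P₃ = 1) (hAu : A u = c • u)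
    (Q : E →L[𝕜] E) :
    ‖Q (A (P₃ u)) - c • Q u‖ ≤ ‖Q (A (P₁ u))‖ + ‖Q (A (P₂ u))‖ := by
  rw [smul_apply_eq_add_of_eigenvector hsum hAu, sub_add_cancel_right, norm_neg]
  exact norm_add_le _ _

end Eigenvector

section Sum

variable {ι : Type*} [Fintype ι] {P : ι → E →L[𝕜] E} {u : E} {a : ι → ℝ} {y : ℝ}

theorem norm_sum_apply_le (h : ∀ i, ‖P i u‖ ≤ a i * y) : ‖(∑ i, P i) u‖ ≤ (∑ i, a i) * y := by
  rw [sum_apply, Finset.sum_mul]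
  exact (norm_sum_le _ _).trans (Finset.sum_le_sum fun i _ => h i)

theorem norm_apply_sum_apply_le (B : E →L[𝕜] E) (hidem : ∀ i, P i ∘L P i = P i)
    (h : ∀ i, ‖P i u‖ ≤ a i * y) : ‖B ((∑ i, P i) u)‖ ≤ (∑ i, ‖B ∘L P i‖ * a i) * y := by
  have hsplit : B ((∑ i, P i) u) = ∑ i, (B ∘L P i) (P i u) := by
    simp only [sum_apply, map_sum, comp_apply, ← comp_apply (P _) (P _), hidem]
  rw [hsplit, Finset.sum_mul]
  refine (norm_sum_le _ _).trans (Finset.sum_le_sum fun i _ => ?_)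
  calc ‖(B ∘L P i) (P i u)‖ ≤ ‖B ∘L P i‖ * ‖P i u‖ := le_opNorm _ _
    _ ≤ ‖B ∘L P i‖ * (a i * y) := mul_le_mul_of_nonneg_left (h i) (norm_nonneg _)
    _ = ‖B ∘L P i‖ * a i * y := (mul_assoc _ _ _).symm

end Sum

end ContinuousLinearMap

theorem sqrt_sq_add_sq_le_of_le_mul_of_gap {x y T S G R : ℝ} (hx₀ : 0 ≤ x) (hy₀ : 0 ≤ y)
    (hx : x ≤ T * y) (hgap : G * y ≤ R + S * y) (hSG : S < G) :
    √(x ^ 2 + y ^ 2) ≤ R / (G - S) * √(1 + T ^ 2) := by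
  have hy : y ≤ R / (G - S) := by rw [le_div_iff₀ (sub_pos.mpr hSG)]; linarith
  have hx2 : x ^ 2 ≤ (T * y) ^ 2 := pow_le_pow_left₀ hx₀ hx 2
  calc √(x ^ 2 + y ^ 2) ≤ √((1 + T ^ 2) * y ^ 2) := Real.sqrt_le_sqrt (by linarith)
    _ = y * √(1 + T ^ 2) := by
      rw [Real.sqrt_mul (by positivity), Real.sqrt_sq hy₀, mul_comm]
    _ ≤ R / (G - S) * √(1 + T ^ 2) := mul_le_mul_of_nonneg_right hy (Real.sqrt_nonneg _)

open ContinuousLinearMap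

theorem selfadjoint_ritz_individual_bound_general
    {H : Type*} [NormedAddCommGroup H] [InnerProductSpace ℂ H] [CompleteSpace H]
    {k : ℕ}
    (A : H →L[ℂ] H) (hA : IsSelfAdjoint A)
    (P₁ P₂ P₃ : H →L[ℂ] H)
    (hP₁sa : IsSelfAdjoint P₁) (hP₃sa : IsSelfAdjoint P₃)
    (hP₃idem : P₃ ∘L P₃ = P₃)
    (hsum : P₁ + P₂ + P₃ = 1)
    (hRR : P₁ ∘L A ∘L P₂ = 0)
    (P2i : Fin (k - 1) → (H →L[ℂ] H))
    (hP2isa : ∀ i, IsSelfAdjoint (P2i i))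
    (hP2iidem : ∀ i, P2i i ∘L P2i i = P2i i)
    (hP2iorth : ∀ i j, i ≠ j → P2i i ∘L P2i j = 0)
    (hP₂sum : P₂ = ∑ i, P2i i)
    (lamhat : Fin (k - 1) → ℝ)
    (hdiag : ∀ i, P2i i ∘L A ∘L P₂ = (lamhat i : ℂ) • P2i i)
    (u : H) (hu : ‖u‖ = 1) (lam : ℝ) (hAu : A u = (lam : ℂ) • u)
    (hne : ∀ i, lam ≠ lamhat i)
    (Gap : ℝ)
    (hGapb : ∀ v ∈ Set.range ⇑P₃, Gap * ‖v‖ ≤ ‖P₃ (A v) - (lam : ℂ) • v‖)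
    (hGap : (∑ i, ‖P₃ ∘L A ∘L P2i i‖ ^ 2 / |lam - lamhat i|) < Gap) :
    Real.sqrt (‖P₂ u‖ ^ 2 + ‖P₃ u‖ ^ 2) ≤
      (‖P₃ ∘L A ∘L P₁‖ /
          (Gap - ∑ i, ‖P₃ ∘L A ∘L P2i i‖ ^ 2 / |lam - lamhat i|)) *
        Real.sqrt (1 + (∑ i, ‖P₃ ∘L A ∘L P2i i‖ / |lam - lamhat i|) ^ 2) := by
  have hpiece (i) : ‖P2i i u‖ ≤ ‖P₃ ∘L A ∘L P2i i‖ / |lam - lamhat i| * ‖P₃ u‖ := by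
    have hP₂P2i : P₂ ∘L P2i i = P2i i := hP₂sum ▸ sum_comp_of_orthogonal P2i hP2iidem hP2iorth i
    have h₁ : P2i i ∘L A ∘L P₁ = 0 := by
      refine comp_comp_eq_zero_comm_of_isSelfAdjoint hA hP₁sa (hP2isa i) ?_
      rw [← hP₂P2i]
      exact congr($hRR ∘L P2i i)
    rw [norm_comp_comp_comm_of_isSelfAdjoint hA hP₃sa (hP2isa i), ← Real.norm_eq_abs,
      ← Complex.norm_real, Complex.ofReal_sub]
    exact norm_apply_le_of_eigenvector hsum hAu hP₃idem (by exact_mod_cast hne i) h₁ (hdiag i)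
  have hP₂u := hP₂sum ▸ norm_sum_apply_le hpiece
  have hAP₂u : ‖P₃ (A (P₂ u))‖
      ≤ (∑ i, ‖P₃ ∘L A ∘L P2i i‖ ^ 2 / |lam - lamhat i|) * ‖P₃ u‖ := by
    simpa only [hP₂sum, comp_assoc, comp_apply, ← mul_div_assoc, ← sq] using
      norm_apply_sum_apply_le (P₃ ∘L A) hP2iidem hpiece
  have hP₁u : ‖P₃ (A (P₁ u))‖ ≤ ‖P₃ ∘L A ∘L P₁‖ := by
    simpa [hu] using (P₃ ∘L A ∘L P₁).le_opNorm u
  have hgap : Gap * ‖P₃ u‖ ≤ ‖P₃ ∘L A ∘L P₁‖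
      + (∑ i, ‖P₃ ∘L A ∘L P2i i‖ ^ 2 / |lam - lamhat i|) * ‖P₃ u‖ :=
    calc Gap * ‖P₃ u‖ ≤ ‖P₃ (A (P₃ u)) - (lam : ℂ) • P₃ u‖ := hGapb _ ⟨u, rfl⟩
      _ ≤ ‖P₃ (A (P₁ u))‖ + ‖P₃ (A (P₂ u))‖ := norm_apply_sub_smul_le_of_eigenvector hsum hAu P₃
      _ ≤ _ := add_le_add hP₁u hAP₂u
  exact sqrt_sq_add_sq_le_of_le_mul_of_gap (norm_nonneg _) (norm_nonneg _) hP₂u hgap hGap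

/-- Theorem 7.1, bound (7.3) of the paper (self-adjoint operator on a Hilbert space,
individual residuals): if `P₂ = Σᵢ P_{2,i}` with rank-one orthogonal projections
`P_{2,i}` satisfying `P_{2,i} ∘ A ∘ P₂ = λ̂ᵢ P_{2,i}`, and
`Gap > Σᵢ ‖rᵢ‖²/|λ − λ̂ᵢ|`, then
`√(‖u₂‖² + ‖u₃‖²) ≤ (‖R₁‖/(Gap − Σᵢ ‖rᵢ‖²/|λ−λ̂ᵢ|)) · √(1 + (Σᵢ ‖rᵢ‖/|λ−λ̂ᵢ|)²)`. -/
theorem selfadjoint_ritz_individual_bound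
    {H : Type*} [NormedAddCommGroup H] [InnerProductSpace ℂ H] [CompleteSpace H]
    {k : ℕ} (hk : 2 ≤ k)
    (A : H →L[ℂ] H) (hA : IsSelfAdjoint A)
    (P₁ P₂ P₃ : H →L[ℂ] H)
    (hP₁sa : IsSelfAdjoint P₁) (hP₂sa : IsSelfAdjoint P₂) (hP₃sa : IsSelfAdjoint P₃)
    (hP₁idem : P₁ ∘L P₁ = P₁) (hP₂idem : P₂ ∘L P₂ = P₂) (hP₃idem : P₃ ∘L P₃ = P₃)
    (hP₁₂ : P₁ ∘L P₂ = 0) (hP₁₃ : P₁ ∘L P₃ = 0) (hP₂₃ : P₂ ∘L P₃ = 0)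
    (hsum : P₁ + P₂ + P₃ = 1)
    (hRR : P₁ ∘L A ∘L P₂ = 0)
    (P2i : Fin (k - 1) → (H →L[ℂ] H))
    (hP2isa : ∀ i, IsSelfAdjoint (P2i i))
    (hP2iidem : ∀ i, P2i i ∘L P2i i = P2i i)
    (hP2irank : ∀ i, Module.finrank ℂ (LinearMap.range (P2i i : H →ₗ[ℂ] H)) = 1)
    (hP2iorth : ∀ i j, i ≠ j → P2i i ∘L P2i j = 0)
    (hP₂sum : P₂ = ∑ i, P2i i)
    (lamhat : Fin (k - 1) → ℝ)
    (hdiag : ∀ i, P2i i ∘L A ∘L P₂ = (lamhat i : ℂ) • P2i i)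
    (u : H) (hu : ‖u‖ = 1) (lam : ℝ) (hAu : A u = (lam : ℂ) • u)
    (hne : ∀ i, lam ≠ lamhat i)
    (Gap : ℝ)
    (hGapb : ∀ v ∈ Set.range ⇑P₃, Gap * ‖v‖ ≤ ‖P₃ (A v) - (lam : ℂ) • v‖)
    (hGap : (∑ i, ‖P₃ ∘L A ∘L P2i i‖ ^ 2 / |lam - lamhat i|) < Gap) :
    Real.sqrt (‖P₂ u‖ ^ 2 + ‖P₃ u‖ ^ 2) ≤
      (‖P₃ ∘L A ∘L P₁‖ /
          (Gap - ∑ i, ‖P₃ ∘L A ∘L P2i i‖ ^ 2 / |lam - lamhat i|)) *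
        Real.sqrt (1 + (∑ i, ‖P₃ ∘L A ∘L P2i i‖ / |lam - lamhat i|) ^ 2) :=
  selfadjoint_ritz_individual_bound_general A hA P₁ P₂ P₃ hP₁sa hP₃sa hP₃idem hsum hRR P2i hP2isa
    hP2iidem hP2iorth hP₂sum lamhat hdiag u hu lam hAu hne Gap hGapb hGap
end
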